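/- For finite posets A, B, C and distinct elements a, b ∈ A: (A ▲_a B) •_b C = (A •_b C) ▲_a B. -/

import Mathlib

/-- The relation of `A •_a B` on `(A \ {a}) ⊔ B`. -/
def bcomp {α β : Type*} (lA : α → α → Prop) (lB : β → β → Prop) (a : α) :
    ({x : α // x ≠ a} ⊕ β) → ({x : α // x ≠ a} ⊕ β) → Prop
  | .inl x, .inl y => lA x.1 y.1
  | .inr x, .inr y => lB x y
  | .inl x, .inr _ => lA x.1 a
  | .inr _, .inl y => lA a y.1

/-- The relation of `A ▲_a B` on `(A \ {a}) ⊔ B`; in the third case `y` is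
required to be a maximal element of `B`. -/
def acomp {α β : Type*} (lA : α → α → Prop) (lB : β → β → Prop) (a : α) :
    ({x : α // x ≠ a} ⊕ β) → ({x : α // x ≠ a} ⊕ β) → Prop
  | .inl x, .inl y => lA x.1 y.1
  | .inr x, .inr y => lB x y
  | .inl x, .inr y => (∀ z, lB y z → z = y) ∧ lA x.1 a
  | .inr _, .inl y => lA a y.1

/-- The canonical identification of the underlying set of `(A ∘_a B) ∘_b C`
with that of `(A ∘_b C) ∘_a B`, for distinct `a, b ∈ A`. -/
def parMap {α β γ : Type*} (a b : α) (hne : a ≠ b) :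
    ({x : {x : α // x ≠ a} ⊕ β // x ≠ Sum.inl ⟨b, hne.symm⟩} ⊕ γ) →
      ({x : {x : α // x ≠ b} ⊕ γ // x ≠ Sum.inl ⟨a, hne⟩} ⊕ β)
  | .inl ⟨.inl x, h⟩ =>
      .inl ⟨.inl ⟨x.1, fun hx => h (congrArg Sum.inl (Subtype.ext hx))⟩,
        fun hEq => x.2 (congrArg Subtype.val (Sum.inl.inj hEq))⟩
  | .inl ⟨.inr y, _⟩ => .inr y
  | .inr c => .inl ⟨.inr c, fun h => nomatch h⟩

theorem stmt9_general {α β γ : Type*}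
    [PartialOrder α] [PartialOrder β] [PartialOrder γ] (a b : α) (hne : a ≠ b) :
    ∀ u v : ({x : {x : α // x ≠ a} ⊕ β // x ≠ Sum.inl ⟨b, hne.symm⟩} ⊕ γ),
      bcomp (acomp ((· ≤ ·) : α → α → Prop) ((· ≤ ·) : β → β → Prop) a)
        ((· ≤ ·) : γ → γ → Prop) (Sum.inl ⟨b, hne.symm⟩) u v ↔
      acomp (bcomp ((· ≤ ·) : α → α → Prop) ((· ≤ ·) : γ → γ → Prop) b)
        ((· ≤ ·) : β → β → Prop) (Sum.inl ⟨a, hne⟩)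
        (parMap a b hne u) (parMap a b hne v) := by
  -- Since `a ≠ b`, the two substitutions touch disjoint parts of `A`, so in each of the nine
  -- cases both sides unfold to the same inequality.
  rintro (⟨_ | _, _⟩ | _) (⟨_ | _, _⟩ | _) <;> exact Iff.rfl

/-- `(A ▲_a B) •_b C = (A •_b C) ▲_a B` for distinct `a, b ∈ A`. -/
theorem stmt9 {α β γ : Type*} [Fintype α] [Fintype β] [Fintype γ]
    [PartialOrder α] [PartialOrder β] [PartialOrder γ] (a b : α) (hne : a ≠ b) :
    ∀ u v : ({x : {x : α // x ≠ a} ⊕ β // x ≠ Sum.inl ⟨b, hne.symm⟩} ⊕ γ),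
      bcomp (acomp ((· ≤ ·) : α → α → Prop) ((· ≤ ·) : β → β → Prop) a)
        ((· ≤ ·) : γ → γ → Prop) (Sum.inl ⟨b, hne.symm⟩) u v ↔
      acomp (bcomp ((· ≤ ·) : α → α → Prop) ((· ≤ ·) : γ → γ → Prop) b)
        ((· ≤ ·) : β → β → Prop) (Sum.inl ⟨a, hne⟩)
        (parMap a b hne u) (parMap a b hne v) :=
  stmt9_general a b hne
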